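/- Suppose additionally that G is differentiable with ∇G locally Lipschitz continuous. Then for every fixed t > 0, the convergence G_T^t(x) → M_G^t(x) as T → 0⁺ is uniform on compact subsets of ℝ^d. -/

import Mathlib

open Set Filter MeasureTheory Real

/-- The Moreau envelope `M_G^t(x) = inf_y G(y) + ‖x - y‖² / (2t)`. -/
noncomputable def moreauEnv {d : ℕ} (G : EuclideanSpace ℝ (Fin d) → ℝ) (t : ℝ)
    (x : EuclideanSpace ℝ (Fin d)) : ℝ :=
  ⨅ y : EuclideanSpace ℝ (Fin d), (G y + ‖x - y‖ ^ 2 / (2 * t))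

/-- The diffusion potential
`G_T^t(x) := -T log (∫ exp((-G(y) - ‖x - y‖²/(2t)) / T) dy)`. -/
noncomputable def diffPot {d : ℕ} (G : EuclideanSpace ℝ (Fin d) → ℝ) (t T : ℝ)
    (x : EuclideanSpace ℝ (Fin d)) : ℝ :=
  -T * Real.log (∫ y : EuclideanSpace ℝ (Fin d),
    Real.exp ((-G y - ‖x - y‖ ^ 2 / (2 * t)) / T))


private lemma aux_one_le (a b : ℝ) (ha : 0 < a) (hb : 0 ≤ b) : 1 ≤ a * b + 1 := by nlinarith

private lemma aux_sq_bound (R n y : ℝ) (h : y ≤ R + n) (hy : 0 ≤ y) (hn : 0 ≤ n) :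
    y ^ 2 ≤ 2 * R ^ 2 + 2 * n ^ 2 := by nlinarith [sq_nonneg (R - n)]

private lemma aux_mul_le (a b c : ℝ) (h : a ≤ b) (hc : 0 < c) (hb : 0 ≤ a) :
    c * a ≤ c * b + 1 := by nlinarith

private lemma aux_quad_bound (n' n m D : ℝ) (h1 : n' - n ≤ m) (hm : 0 ≤ m)
    (hb1 : n ≤ D) (hb2 : n' ≤ D) (hn : 0 ≤ n) (hn' : 0 ≤ n') :
    n' ^ 2 ≤ n ^ 2 + (2 * D + 1) * m := by nlinarith

private lemma aux_le_div (a T : ℝ) (ha : 0 ≤ a) (hT0 : 0 < T) (hT1 : T ≤ 1) :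
    a ≤ a / T := by
  rw [le_div_iff₀ hT0]; nlinarith

private lemma aux_neg_log (L T c : ℝ) (hT0 : 0 ≤ T) (hc : |L| + 1 = c) :
    -T * L ≤ T * c := by
  have h1 : -L ≤ |L| := neg_le_abs _
  nlinarith

private lemma aux_key (g q M T : ℝ) (hM : M ≤ g + q) (hT0 : 0 < T) (hT1 : T ≤ 1) :
    (-g - q) / T ≤ -M / T + M + (-g - q) := by
  have hT : T ≠ 0 := ne_of_gt hT0
  rw [div_le_iff₀ hT0, add_mul, add_mul, div_mul_cancel₀ _ hT]
  have h := mul_nonneg (sub_nonneg.mpr hM) (sub_nonneg.mpr hT1)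
  nlinarith [h]

private lemma aux_mono_mul (T a c : ℝ) (hT0 : 0 ≤ T) (h : a ≤ c) : T * a ≤ T * c :=
  mul_le_mul_of_nonneg_left h hT0

set_option maxHeartbeats 1600000 in
/-- if additionally `G` is differentiable with `∇G` locally Lipschitz, then
for every fixed `t > 0` the convergence `G_T^t → M_G^t` as `T → 0⁺` is uniform on compact
subsets of `ℝ^d`. -/
theorem diffPot_tendstoUniformlyOn_moreauEnv {d : ℕ}
    (G : EuclideanSpace ℝ (Fin d) → ℝ)
    (hGcont : Continuous G)
    (hGcoercive : ∀ r : ℝ, ∃ R : ℝ, ∀ y : EuclideanSpace ℝ (Fin d), R ≤ ‖y‖ → r ≤ G y)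
    (hGbddBelow : ∃ m : ℝ, ∀ y : EuclideanSpace ℝ (Fin d), m ≤ G y)
    (hInt : ∀ (x : EuclideanSpace ℝ (Fin d)) (t : ℝ), 0 < t →
      Integrable (fun y : EuclideanSpace ℝ (Fin d) =>
        Real.exp (-G y - ‖x - y‖ ^ 2 / (2 * t))))
    (hGdiff : Differentiable ℝ G)
    (hGradLip : LocallyLipschitz (fun y => gradient G y)) :
    ∀ (t : ℝ), 0 < t → ∀ C : Set (EuclideanSpace ℝ (Fin d)), IsCompact C →
      TendstoUniformlyOn (fun T x => diffPot G t T x) (fun x => moreauEnv G t x)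
        (nhdsWithin 0 (Set.Ioi 0)) C := by
  intro t ht C hC
  obtain ⟨m₀, hm₀⟩ := hGbddBelow
  have ht' : t ≠ 0 := ne_of_gt ht
  have h2t : (0:ℝ) < 2 * t := by linarith
  rw [Metric.tendstoUniformlyOn_iff]
  intro ε hε
  -- bound the compact set
  obtain ⟨R₀, hR₀⟩ := hC.isBounded.subset_closedBall 0
  set R : ℝ := max R₀ 1 with hRdef
  have hR1 : (1:ℝ) ≤ R := le_max_right _ _
  have hRpos : (0:ℝ) < R := lt_of_lt_of_le one_pos hR1
  have hRC : C ⊆ Metric.closedBall 0 R :=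
    hR₀.trans (Metric.closedBall_subset_closedBall (le_max_left _ _))
  clear_value R
  -- bound |G| on the closed ball
  obtain ⟨A₀, hA₀⟩ := (isCompact_closedBall (0 : EuclideanSpace ℝ (Fin d)) R).exists_bound_of_continuousOn
    hGcont.continuousOn
  set A : ℝ := max A₀ m₀ with hAdef
  have hAm₀ : m₀ ≤ A := le_max_right _ _
  -- bounds on the Moreau envelope
  have hq0 : ∀ (x y : EuclideanSpace ℝ (Fin d)), 0 ≤ ‖x - y‖ ^ 2 / (2 * t) := by
    intro x y; positivity
  have hbdd : ∀ x : EuclideanSpace ℝ (Fin d),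
      BddBelow (Set.range fun y => G y + ‖x - y‖ ^ 2 / (2 * t)) := by
    intro x
    refine ⟨m₀, ?_⟩
    rintro _ ⟨y, rfl⟩
    have h1 := hq0 x y; have h2 := hm₀ y
    simp only at *
    linarith
  have hJle : ∀ (x y : EuclideanSpace ℝ (Fin d)),
      moreauEnv G t x ≤ G y + ‖x - y‖ ^ 2 / (2 * t) := fun x y => ciInf_le (hbdd x) y
  have hMlb : ∀ x, m₀ ≤ moreauEnv G t x := by
    intro x
    exact le_ciInf fun y => by have h1 := hq0 x y; have h2 := hm₀ y; linarith
  have hMub : ∀ x ∈ C, moreauEnv G t x ≤ A := by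
    intro x hx
    have h1 : moreauEnv G t x ≤ G x + ‖x - x‖ ^ 2 / (2 * t) := hJle x x
    have h2 : ‖x - x‖ ^ 2 / (2 * t) = 0 := by simp
    have h3 : G x ≤ ‖G x‖ := le_abs_self _
    have h4 : ‖G x‖ ≤ A₀ := hA₀ x (hRC hx)
    have h5 : A₀ ≤ A := le_max_left _ _
    rw [h2] at h1
    linarith
  clear_value A
  set B : ℝ := max |A| |m₀| with hBdef
  have hB0 : 0 ≤ B := le_trans (abs_nonneg _) (le_max_left _ _)
  have hMB : ∀ x ∈ C, |moreauEnv G t x| ≤ B := by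
    intro x hx
    rw [abs_le]
    constructor
    · have := hMlb x
      have h1 : -|m₀| ≤ m₀ := neg_abs_le _
      have h2 : |m₀| ≤ B := le_max_right _ _
      linarith
    · have := hMub x hx
      have h1 : A ≤ |A| := le_abs_self _
      have h2 : |A| ≤ B := le_max_left _ _
      linarith
  clear_value B
  -- uniform upper bound K on the T = 1 integrals
  set I₀ : ℝ := ∫ y : EuclideanSpace ℝ (Fin d),
      Real.exp (-G y - ‖(0 : EuclideanSpace ℝ (Fin d)) - y‖ ^ 2 / (2 * (2 * t))) with hI₀def
  have hI₀int := hInt 0 (2 * t) h2t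
  have hI₀0 : 0 ≤ I₀ := integral_nonneg fun y => (Real.exp_pos _).le
  set K : ℝ := Real.exp (R ^ 2 / (2 * t)) * I₀ + 1 with hKdef
  have hK1 : 1 ≤ K := by rw [hKdef]; exact aux_one_le _ _ (Real.exp_pos _) hI₀0
  have hlogK0 : 0 ≤ Real.log K := Real.log_nonneg hK1
  have hKpos : (0:ℝ) < K := by linarith
  have hIK : ∀ x ∈ Metric.closedBall (0 : EuclideanSpace ℝ (Fin d)) R,
      (∫ y : EuclideanSpace ℝ (Fin d), Real.exp (-G y - ‖x - y‖ ^ 2 / (2 * t))) ≤ K := by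
    intro x hx
    have hxR : ‖x‖ ≤ R := by simpa [Metric.mem_closedBall, dist_zero_right] using hx
    have hpt : ∀ y, Real.exp (-G y - ‖x - y‖ ^ 2 / (2 * t)) ≤
        Real.exp (R ^ 2 / (2 * t)) *
          Real.exp (-G y - ‖(0 : EuclideanSpace ℝ (Fin d)) - y‖ ^ 2 / (2 * (2 * t))) := by
      intro y
      rw [← Real.exp_add]
      apply Real.exp_le_exp.mpr
      have h0y : ‖(0 : EuclideanSpace ℝ (Fin d)) - y‖ = ‖y‖ := by rw [zero_sub, norm_neg]
      rw [h0y]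
      have htri : ‖y‖ ≤ ‖x‖ + ‖x - y‖ := by
        have h1 : x - (x - y) = y := by abel
        calc ‖y‖ = ‖x - (x - y)‖ := by rw [h1]
          _ ≤ ‖x‖ + ‖x - y‖ := norm_sub_le _ _
      have hkey : ‖y‖ ^ 2 ≤ 2 * R ^ 2 + 2 * ‖x - y‖ ^ 2 :=
        aux_sq_bound R ‖x - y‖ ‖y‖ (by linarith) (norm_nonneg y) (norm_nonneg _)
      have heq2 : R ^ 2 / (2 * t) + (-G y - ‖y‖ ^ 2 / (2 * (2 * t)))
          - (-G y - ‖x - y‖ ^ 2 / (2 * t))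
          = (2 * R ^ 2 + 2 * ‖x - y‖ ^ 2 - ‖y‖ ^ 2) / (2 * (2 * t)) := by
        field_simp
        try ring
      have h5 : 0 ≤ (2 * R ^ 2 + 2 * ‖x - y‖ ^ 2 - ‖y‖ ^ 2) / (2 * (2 * t)) :=
        div_nonneg (by linarith) (by linarith)
      linarith
    have h6 : (∫ y : EuclideanSpace ℝ (Fin d), Real.exp (-G y - ‖x - y‖ ^ 2 / (2 * t))) ≤
        ∫ y : EuclideanSpace ℝ (Fin d), Real.exp (R ^ 2 / (2 * t)) *
          Real.exp (-G y - ‖(0 : EuclideanSpace ℝ (Fin d)) - y‖ ^ 2 / (2 * (2 * t))) :=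
      integral_mono (hInt x t ht) (hI₀int.const_mul _) hpt
    rw [integral_const_mul, ← hI₀def] at h6
    rw [hKdef]
    have h7 := aux_mul_le _ I₀ (Real.exp (R ^ 2 / (2 * t))) le_rfl (Real.exp_pos _)
      (integral_nonneg fun y => (Real.exp_pos _).le)
    linarith
  clear_value K I₀
  -- coercivity radius
  obtain ⟨R₁, hR₁⟩ := hGcoercive (A + 2)
  set R' : ℝ := max R₁ 0 with hR'def
  have hR'0 : (0:ℝ) ≤ R' := le_max_right _ _
  -- ε'
  set ε' : ℝ := min (ε / 4) (1 / 2) with hε'def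
  have hε'pos : 0 < ε' := lt_min (by linarith) (by norm_num)
  have hε'le : ε' ≤ ε / 4 := min_le_left _ _
  have hε'1 : ε' ≤ 1 / 2 := min_le_right _ _
  clear_value ε'
  -- near minimizers are in the ball of radius R'
  have hloc : ∀ x ∈ C, ∀ y : EuclideanSpace ℝ (Fin d),
      G y + ‖x - y‖ ^ 2 / (2 * t) < moreauEnv G t x + 1 → ‖y‖ ≤ R' := by
    intro x hx y hy
    by_contra hcon
    push_neg at hcon
    have h1 : R₁ ≤ ‖y‖ := le_trans (le_max_left _ _) hcon.le
    have hGy : A + 2 ≤ G y := hR₁ y h1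
    have h2 := hMub x hx
    have h3 := hq0 x y
    linarith
  clear_value R'
  -- uniform continuity of G on the ball of radius R' + 1
  have huc := (isCompact_closedBall (0 : EuclideanSpace ℝ (Fin d)) (R' + 1)).uniformContinuousOn_of_continuous
    hGcont.continuousOn
  rw [Metric.uniformContinuousOn_iff] at huc
  obtain ⟨δ₁, hδ₁pos, hδ₁⟩ := huc (ε' / 2) (by linarith)
  set Lq : ℝ := (2 * (R + R' + 1) + 1) / (2 * t) with hLqdef
  have hLqpos : 0 < Lq := div_pos (by linarith) h2t
  have hLqne : Lq ≠ 0 := ne_of_gt hLqpos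
  clear_value Lq
  set δ : ℝ := min 1 (min δ₁ (ε' / (2 * Lq))) with hδdef
  have hδpos : 0 < δ := lt_min one_pos (lt_min hδ₁pos (div_pos hε'pos (by linarith)))
  have hδ1 : δ ≤ 1 := min_le_left _ _
  have hδδ₁ : δ ≤ δ₁ := le_trans (min_le_right _ _) (min_le_left _ _)
  have hδL : δ * Lq ≤ ε' / 2 := by
    have h1 : δ ≤ ε' / (2 * Lq) := le_trans (min_le_right _ _) (min_le_right _ _)
    have h2 : δ * Lq ≤ (ε' / (2 * Lq)) * Lq := mul_le_mul_of_nonneg_right h1 hLqpos.le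
    have h3 : (ε' / (2 * Lq)) * Lq = ε' / 2 := by field_simp [hLqne]; try ring
    linarith
  clear_value δ
  -- the uniform upper estimate near near-minimizers
  have hup : ∀ x ∈ C, ∀ y : EuclideanSpace ℝ (Fin d),
      G y + ‖x - y‖ ^ 2 / (2 * t) < moreauEnv G t x + ε' →
      ∀ y' ∈ Metric.ball y δ, G y' + ‖x - y'‖ ^ 2 / (2 * t) < moreauEnv G t x + 2 * ε' := by
    intro x hx y hy y' hy'
    have hxR : ‖x‖ ≤ R := by simpa [Metric.mem_closedBall, dist_zero_right] using hRC hx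
    have hyR : ‖y‖ ≤ R' := hloc x hx y (by linarith)
    have hd : dist y' y < δ := Metric.mem_ball.mp hy'
    have hdn : ‖y' - y‖ < δ := by rwa [← dist_eq_norm]
    have hy'R : ‖y'‖ ≤ R' + 1 := by
      have h1 : ‖y'‖ - ‖y‖ ≤ ‖y' - y‖ := norm_sub_norm_le y' y
      linarith
    have hGpart : |G y' - G y| < ε' / 2 := by
      have h1 : y ∈ Metric.closedBall (0 : EuclideanSpace ℝ (Fin d)) (R' + 1) := by
        simp only [Metric.mem_closedBall, dist_zero_right]; linarith
      have h2 : y' ∈ Metric.closedBall (0 : EuclideanSpace ℝ (Fin d)) (R' + 1) := by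
        simp only [Metric.mem_closedBall, dist_zero_right]; linarith
      have h3 := hδ₁ y' h2 y h1 (lt_of_lt_of_le hd hδδ₁)
      rwa [Real.dist_eq] at h3
    have hb1 : ‖x - y‖ ≤ R + R' + 1 := by linarith [norm_sub_le x y]
    have hb2 : ‖x - y'‖ ≤ R + R' + 1 := by linarith [norm_sub_le x y']
    have habs : |‖x - y'‖ - ‖x - y‖| ≤ ‖y' - y‖ := by
      have h1 := abs_norm_sub_norm_le (x - y') (x - y)
      have he : (x - y') - (x - y) = y - y' := by abel
      rw [he] at h1
      calc |‖x - y'‖ - ‖x - y‖| ≤ ‖y - y'‖ := h1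
        _ = ‖y' - y‖ := norm_sub_rev _ _
    have hquad : ‖x - y'‖ ^ 2 ≤ ‖x - y‖ ^ 2 + (2 * (R + R' + 1) + 1) * ‖y' - y‖ := by
      have h3 := abs_le.mp habs
      exact aux_quad_bound _ _ _ _ h3.2 (norm_nonneg _) hb1 hb2 (norm_nonneg _) (norm_nonneg _)
    have hquad2 : ‖x - y'‖ ^ 2 / (2 * t) ≤ ‖x - y‖ ^ 2 / (2 * t) + ε' / 2 := by
      have h4 : ‖x - y'‖ ^ 2 / (2 * t) ≤
          (‖x - y‖ ^ 2 + (2 * (R + R' + 1) + 1) * ‖y' - y‖) / (2 * t) :=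
        (div_le_div_iff_of_pos_right h2t).mpr hquad
      have h5 : (‖x - y‖ ^ 2 + (2 * (R + R' + 1) + 1) * ‖y' - y‖) / (2 * t)
          = ‖x - y‖ ^ 2 / (2 * t) + Lq * ‖y' - y‖ := by
        rw [hLqdef]; field_simp; try ring
      have h6 : Lq * ‖y' - y‖ ≤ Lq * δ := mul_le_mul_of_nonneg_left hdn.le hLqpos.le
      have h7 : Lq * δ = δ * Lq := mul_comm _ _
      linarith
    have h8 := (abs_lt.mp hGpart).2
    linarith
  -- volume of small balls
  set v : ℝ := (volume (Metric.ball (0 : EuclideanSpace ℝ (Fin d)) δ)).toReal with hvdef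
  have hvpos : 0 < v := by
    rw [hvdef]
    exact ENNReal.toReal_pos (Metric.measure_ball_pos volume 0 hδpos).ne' measure_ball_lt_top.ne
  clear_value v
  -- constants and the threshold T₀
  set c₂ : ℝ := B + Real.log K + 1 with hc₂def
  have hc₂pos : 0 < c₂ := by rw [hc₂def]; linarith
  have hc₂ne : c₂ ≠ 0 := ne_of_gt hc₂pos
  set c₃ : ℝ := |Real.log v| + 1 with hc₃def
  have hc₃pos : 0 < c₃ := by rw [hc₃def]; positivity
  have hc₃ne : c₃ ≠ 0 := ne_of_gt hc₃pos
  clear_value c₂ c₃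
  set T₀ : ℝ := min 1 (min (ε / (2 * c₂)) (ε / (2 * c₃))) with hT₀def
  have hT₀pos : 0 < T₀ := lt_min one_pos
    (lt_min (div_pos hε (by linarith)) (div_pos hε (by linarith)))
  filter_upwards [Ioo_mem_nhdsGT_of_mem (Set.left_mem_Ico.mpr hT₀pos)] with T hT x hx
  obtain ⟨hT0, hTT₀⟩ := hT
  have hT1 : T ≤ 1 := le_of_lt (lt_of_lt_of_le hTT₀ (min_le_left _ _))
  have hTne : T ≠ 0 := ne_of_gt hT0
  have hTc₂ : T * c₂ < ε / 2 := by
    have h1 : T < ε / (2 * c₂) :=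
      lt_of_lt_of_le hTT₀ (le_trans (min_le_right _ _) (min_le_left _ _))
    have h2 : T * c₂ < (ε / (2 * c₂)) * c₂ := mul_lt_mul_of_pos_right h1 hc₂pos
    have h3 : (ε / (2 * c₂)) * c₂ = ε / 2 := by field_simp [hc₂ne]; try ring
    linarith
  have hTc₃ : T * c₃ < ε / 2 := by
    have h1 : T < ε / (2 * c₃) :=
      lt_of_lt_of_le hTT₀ (le_trans (min_le_right _ _) (min_le_right _ _))
    have h2 : T * c₃ < (ε / (2 * c₃)) * c₃ := mul_lt_mul_of_pos_right h1 hc₃pos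
    have h3 : (ε / (2 * c₃)) * c₃ = ε / 2 := by field_simp [hc₃ne]; try ring
    linarith
  -- per-x estimates
  have hMxA := hMub x hx
  have hMxm := hMlb x
  have hMxB := hMB x hx
  set M : ℝ := moreauEnv G t x with hMdef
  show dist M (diffPot G t T x) < ε
  clear_value M
  have hMB' : M ≤ B := le_trans (le_abs_self _) hMxB
  -- continuity and integrability of the integrand at temperature T
  have hcont : Continuous fun y : EuclideanSpace ℝ (Fin d) =>
      Real.exp ((-G y - ‖x - y‖ ^ 2 / (2 * t)) / T) := by
    apply Real.continuous_exp.comp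
    apply Continuous.div_const
    apply Continuous.sub hGcont.neg
    apply Continuous.div_const
    exact ((continuous_const.sub continuous_id).norm.pow 2)
  have hintT : Integrable (fun y : EuclideanSpace ℝ (Fin d) =>
      Real.exp ((-G y - ‖x - y‖ ^ 2 / (2 * t)) / T)) := by
    apply Integrable.mono' ((hInt x t ht).const_mul (Real.exp (-m₀ / T + m₀)))
      hcont.aestronglyMeasurable
    filter_upwards with y
    rw [Real.norm_eq_abs, Real.abs_exp, ← Real.exp_add]
    apply Real.exp_le_exp.mpr
    have hm : m₀ ≤ G y + ‖x - y‖ ^ 2 / (2 * t) := by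
      have h1 := hm₀ y; have h2 := hq0 x y; linarith
    exact aux_key _ _ _ _ hm hT0 hT1
  set J : ℝ := ∫ y : EuclideanSpace ℝ (Fin d),
      Real.exp ((-G y - ‖x - y‖ ^ 2 / (2 * t)) / T) with hJdef
  -- upper bound on J
  have hJub : J ≤ Real.exp (-M / T) * (Real.exp B * K) := by
    have hpt : ∀ y, Real.exp ((-G y - ‖x - y‖ ^ 2 / (2 * t)) / T) ≤
        Real.exp (-M / T + M) * Real.exp (-G y - ‖x - y‖ ^ 2 / (2 * t)) := by
      intro y
      rw [← Real.exp_add]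
      apply Real.exp_le_exp.mpr
      have hm : M ≤ G y + ‖x - y‖ ^ 2 / (2 * t) := by
        have h1 := hJle x y
        rw [← hMdef] at h1
        exact h1
      exact aux_key _ _ _ _ hm hT0 hT1
    have h3 : J ≤ ∫ y : EuclideanSpace ℝ (Fin d),
        Real.exp (-M / T + M) * Real.exp (-G y - ‖x - y‖ ^ 2 / (2 * t)) :=
      integral_mono hintT ((hInt x t ht).const_mul _) hpt
    rw [integral_const_mul] at h3
    have h4 := hIK x (hRC hx)
    have h5 : Real.exp (-M / T + M) *
        (∫ y : EuclideanSpace ℝ (Fin d), Real.exp (-G y - ‖x - y‖ ^ 2 / (2 * t))) ≤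
        Real.exp (-M / T + M) * K := mul_le_mul_of_nonneg_left h4 (Real.exp_pos _).le
    have h6 : Real.exp (-M / T + M) ≤ Real.exp (-M / T) * Real.exp B := by
      rw [← Real.exp_add]
      exact Real.exp_le_exp.mpr (by linarith)
    have h7 : Real.exp (-M / T + M) * K ≤ (Real.exp (-M / T) * Real.exp B) * K :=
      mul_le_mul_of_nonneg_right h6 (by linarith)
    calc J ≤ Real.exp (-M / T + M) *
        (∫ y : EuclideanSpace ℝ (Fin d), Real.exp (-G y - ‖x - y‖ ^ 2 / (2 * t))) := h3
      _ ≤ Real.exp (-M / T + M) * K := h5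
      _ ≤ (Real.exp (-M / T) * Real.exp B) * K := h7
      _ = Real.exp (-M / T) * (Real.exp B * K) := mul_assoc _ _ _
  -- lower bound on J
  have hJlb : v * Real.exp (-(M + 2 * ε') / T) ≤ J := by
    obtain ⟨y₀, hy₀⟩ : ∃ y : EuclideanSpace ℝ (Fin d),
        G y + ‖x - y‖ ^ 2 / (2 * t) < M + ε' := by
      apply exists_lt_of_ciInf_lt
      show moreauEnv G t x < M + ε'
      rw [← hMdef]
      linarith
    have hball : ∀ y' ∈ Metric.ball y₀ δ,
        Real.exp (-(M + 2 * ε') / T) ≤ Real.exp ((-G y' - ‖x - y'‖ ^ 2 / (2 * t)) / T) := by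
      intro y' hy'
      apply Real.exp_le_exp.mpr
      have hy₀' : G y₀ + ‖x - y₀‖ ^ 2 / (2 * t) < moreauEnv G t x + ε' := by
        rw [← hMdef]; exact hy₀
      have h8 := hup x hx y₀ hy₀' y' hy'
      rw [← hMdef] at h8
      have h9 : -(M + 2 * ε') ≤ -G y' - ‖x - y'‖ ^ 2 / (2 * t) := by linarith
      exact (div_le_div_iff_of_pos_right hT0).mpr h9
    calc v * Real.exp (-(M + 2 * ε') / T)
        = ∫ _ in Metric.ball y₀ δ, Real.exp (-(M + 2 * ε') / T) := by
          rw [setIntegral_const, smul_eq_mul, measureReal_def, Measure.addHaar_ball_center, ← hvdef]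
      _ ≤ ∫ y' in Metric.ball y₀ δ,
          Real.exp ((-G y' - ‖x - y'‖ ^ 2 / (2 * t)) / T) := by
          apply setIntegral_mono_on
          · exact integrableOn_const measure_ball_lt_top.ne
          · exact hintT.integrableOn
          · exact measurableSet_ball
          · exact hball
      _ ≤ J := setIntegral_le_integral hintT (Filter.Eventually.of_forall fun y' => (Real.exp_pos _).le)
  have hJpos : 0 < J := lt_of_lt_of_le (mul_pos hvpos (Real.exp_pos _)) hJlb
  -- log estimates
  have hKne : K ≠ 0 := by linarith
  have hlog1 : Real.log J ≤ -M / T + (B + Real.log K) := by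
    have h1 := Real.log_le_log hJpos hJub
    rw [Real.log_mul (Real.exp_ne_zero _)
        (ne_of_gt (mul_pos (Real.exp_pos _) hKpos)), Real.log_exp,
      Real.log_mul (Real.exp_ne_zero _) hKne, Real.log_exp] at h1
    linarith
  have hlog2 : Real.log v + (-(M + 2 * ε') / T) ≤ Real.log J := by
    have h1 := Real.log_le_log (mul_pos hvpos (Real.exp_pos _)) hJlb
    rwa [Real.log_mul (ne_of_gt hvpos) (Real.exp_ne_zero _), Real.log_exp] at h1
  have hGT : diffPot G t T x = -T * Real.log J := by
    simp only [diffPot]; rfl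
  have hupper : diffPot G t T x ≤ M + 2 * ε' + T * c₃ := by
    rw [hGT]
    have h9 : -T * Real.log J ≤ -T * (Real.log v + (-(M + 2 * ε') / T)) :=
      mul_le_mul_of_nonpos_left hlog2 (by linarith)
    have h10 : -T * (Real.log v + (-(M + 2 * ε') / T)) = -T * Real.log v + (M + 2 * ε') := by
      field_simp
      try ring
    have h11 : -T * Real.log v ≤ T * c₃ :=
      aux_neg_log _ _ _ hT0.le (by rw [hc₃def])
    linarith
  have hlower : M - T * c₂ ≤ diffPot G t T x := by
    rw [hGT]
    have h9 : -T * (-M / T + (B + Real.log K)) ≤ -T * Real.log J :=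
      mul_le_mul_of_nonpos_left hlog1 (by linarith)
    have h10 : -T * (-M / T + (B + Real.log K)) = M - T * (B + Real.log K) := by
      field_simp
      try ring
    have h11 : T * (B + Real.log K) ≤ T * c₂ :=
      aux_mono_mul _ _ _ hT0.le (by rw [hc₂def]; linarith)
    linarith
  rw [Real.dist_eq, abs_sub_lt_iff]
  constructor
  · linarith only [hlower, hTc₂, hε]
  · linarith only [hupper, hTc₃, hε'le, hε]
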